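/- arXiv:1610.01805 — 5 statements merged into one kernel-verified Lean document; each statement's English description precedes it below -/
import Mathlib

section
/- Let k be an algebraically closed field of characteristic zero and let p, q ∈ k[t] be polynomials with r, s ≥ 2 integers such that p^r + q^s = 1 and p, q are nonconstant. Then no such p, q exist; equivalently, a nonconstant polynomial f ∈ k[t] cannot have two distinct multiple fibers (fibers f^*(c) all of whose roots have multiplicity divisible by some d > 1). -/
/-!
Suppose `f - c₁ = g₁ ^ d₁` and `f - c₂ = g₂ ^ d₂` with `c₁ ≠ c₂`. Rescaling `g₁, g₂` by suitable
roots of `(c₂ - c₁)⁻¹` and `-(c₂ - c₁)⁻¹` turns the difference of the two equations into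
`p ^ d₁ + q ^ d₂ = 1`. By Mason–Stothers applied to `p ^ r + q ^ s + (-1) = 0`, both `r deg p` and
`s deg q` are smaller than the degree of the radical of `p ^ r q ^ s`, which is at most
`deg p + deg q`; adding the two bounds contradicts `r, s ≥ 2`. (The other alternative of
Mason–Stothers, `(p ^ r)' = 0`, is excluded in characteristic zero.)
-/

open Polynomial UniqueFactorizationMonoid

namespace Polynomial

variable {k : Type*} [Field k]

theorem natDegree_radical_pow_mul_pow_le [DecidableEq k] (p q : k[X]) (r s : ℕ) :
    (radical (p ^ r * q ^ s)).natDegree ≤ p.natDegree + q.natDegree :=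
  calc (radical (p ^ r * q ^ s)).natDegree
      ≤ (radical p * radical q).natDegree :=
        natDegree_le_of_dvd (radical_mul_dvd.trans (mul_dvd_mul radical_pow_dvd radical_pow_dvd))
          (mul_ne_zero radical_ne_zero radical_ne_zero)
    _ = (radical p).natDegree + (radical q).natDegree :=
        natDegree_mul radical_ne_zero radical_ne_zero
    _ ≤ p.natDegree + q.natDegree := add_le_add natDegree_radical_le natDegree_radical_le

theorem pow_add_pow_ne_one [CharZero k] {p q : k[X]} {r s : ℕ} (hr : 2 ≤ r) (hs : 2 ≤ s)
    (hp : 0 < p.natDegree) (hq : 0 < q.natDegree) : p ^ r + q ^ s ≠ 1 := by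
  classical
  intro h
  have hcop : IsCoprime (p ^ r) (q ^ s) := ⟨1, 1, by linear_combination h⟩
  have hrad := natDegree_radical_pow_mul_pow_le p q r s
  rw [← UniqueFactorizationDomain.radical_neg, ← mul_neg_one] at hrad
  rcases Polynomial.abc (pow_ne_zero r (ne_zero_of_natDegree_gt hp))
      (pow_ne_zero s (ne_zero_of_natDegree_gt hq)) (neg_ne_zero.mpr one_ne_zero) hcop
      (by rw [h]; ring) with ⟨hpr, hqs, -⟩ | ⟨hder, -, -⟩
  · rw [natDegree_pow] at hpr hqs
    nlinarith
  · have hdeg := derivative_eq_zero.mp hder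
    rw [natDegree_pow] at hdeg
    exact (Nat.mul_pos (by omega) hp).ne' hdeg

theorem natDegree_pos_of_sub_C_eq_pow {f g : k[X]} {c : k} {d : ℕ} (hf : 0 < f.natDegree)
    (h : f - C c = g ^ d) : 0 < g.natDegree := by
  rw [← natDegree_sub_C (a := c), h, natDegree_pow] at hf
  exact Nat.pos_of_mul_pos_left hf

theorem exists_C_mul_pow_add_C_mul_pow_eq_one [IsAlgClosed k] {g₁ g₂ : k[X]} {d₁ d₂ : ℕ}
    (hd₁ : d₁ ≠ 0) (hd₂ : d₂ ≠ 0) {e : k} (he : e ≠ 0) (h : g₁ ^ d₁ - g₂ ^ d₂ = C e) :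
    ∃ α β : k, α ≠ 0 ∧ β ≠ 0 ∧ (C α * g₁) ^ d₁ + (C β * g₂) ^ d₂ = 1 := by
  obtain ⟨α, hα⟩ := IsAlgClosed.exists_pow_nat_eq e⁻¹ (Nat.pos_of_ne_zero hd₁)
  obtain ⟨β, hβ⟩ := IsAlgClosed.exists_pow_nat_eq (-e⁻¹) (Nat.pos_of_ne_zero hd₂)
  refine ⟨α, β, ne_zero_pow hd₁ (hα ▸ inv_ne_zero he),
    ne_zero_pow hd₂ (hβ ▸ neg_ne_zero.mpr (inv_ne_zero he)), ?_⟩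
  calc (C α * g₁) ^ d₁ + (C β * g₂) ^ d₂ = C e⁻¹ * (g₁ ^ d₁ - g₂ ^ d₂) := by
        rw [mul_pow, mul_pow, ← C_pow, ← C_pow, hα, hβ, C_neg]; ring
    _ = 1 := by rw [h, ← C_mul, inv_mul_cancel₀ he, C_1]

end Polynomial

/-- A nonconstant polynomial over an algebraically closed field of characteristic zero
cannot have two multiple fibers; equivalently, there are no nonconstant `p, q` with
`p ^ r + q ^ s = 1` for `r, s ≥ 2`. -/
theorem stmt_0 (k : Type*) [Field k] [IsAlgClosed k] [CharZero k] :
    (∀ (p q : Polynomial k) (r s : ℕ), 2 ≤ r → 2 ≤ s →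
      0 < p.natDegree → 0 < q.natDegree → p ^ r + q ^ s = 1 → False) ∧
    (∀ f : Polynomial k, 0 < f.natDegree →
      ∀ (c₁ c₂ : k) (d₁ d₂ : ℕ), 2 ≤ d₁ → 2 ≤ d₂ →
        (∃ g : Polynomial k, f - Polynomial.C c₁ = g ^ d₁) →
        (∃ g : Polynomial k, f - Polynomial.C c₂ = g ^ d₂) → c₁ = c₂) := by
  refine ⟨fun p q r s hr hs hp hq => pow_add_pow_ne_one hr hs hp hq, ?_⟩
  rintro f hf c₁ c₂ d₁ d₂ hd₁ hd₂ ⟨g₁, h₁⟩ ⟨g₂, h₂⟩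
  by_contra hne
  have hdiff : g₁ ^ d₁ - g₂ ^ d₂ = C (c₂ - c₁) := by rw [← h₁, ← h₂, C_sub]; ring
  obtain ⟨α, β, hα, hβ, hsum⟩ := exists_C_mul_pow_add_C_mul_pow_eq_one (by omega) (by omega)
    (sub_ne_zero.mpr (Ne.symm hne)) hdiff
  refine pow_add_pow_ne_one hd₁ hd₂ ?_ ?_ hsum
  · rw [natDegree_C_mul hα]; exact natDegree_pos_of_sub_C_eq_pow hf h₁
  · rw [natDegree_C_mul hβ]; exact natDegree_pos_of_sub_C_eq_pow hf h₂
end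

section
/- Let A be a commutative ring, I ⊆ A an ideal, and f ∈ I a non-zerodivisor. Let A' = A[tI]/(1 - tf) be the quotient of the Rees algebra A[tI] = ⊕_{n≥0} t^n I^n by the principal ideal generated by 1 - tf. If I = (a_1, …, a_l), then A' is isomorphic to the subring A[a_1/f, …, a_l/f] of the localization A_f. -/
/-!
Evaluating polynomials at `t = 1/f` maps the Rees algebra `A[tI]` onto `A[a_1/f, …, a_l/f]`,
because `I^n t^n` is spanned by monomials `(a_{i_1} ⋯ a_{i_n}) t^n ↦ (a_{i_1}/f) ⋯ (a_{i_n}/f)`.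
Its kernel in `A[t]` is `(1 - tf)`, since `A[t]/(ft - 1) ≅ A_f`. An element `(1 - ft) q` of the
kernel that lies in `A[tI]` already has `q ∈ A[tI]`: comparing coefficients,
`q_{n+1} = ((1 - ft) q)_{n+1} + f q_n ∈ I^{n+1}` by induction on `n`, as `f ∈ I`.
-/

open Polynomial

section

variable {A : Type*} [CommRing A]

lemma mem_reesAlgebra_of_one_sub_C_mul_X_mul_mem {I : Ideal A} {f : A} (hfI : f ∈ I)
    {q : A[X]} (h : (1 - C f * X) * q ∈ reesAlgebra I) : q ∈ reesAlgebra I := by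
  rw [mem_reesAlgebra_iff] at h ⊢
  intro n
  induction n with
  | zero => simp
  | succ n ih =>
    have hcoeff : q.coeff (n + 1) = ((1 - C f * X) * q).coeff (n + 1) + q.coeff n * f := by
      simp [sub_mul, mul_assoc, coeff_C_mul, coeff_X_mul, mul_comm f]
    rw [hcoeff, pow_succ]
    exact add_mem (h (n + 1)) (Ideal.mul_mem_mul ih hfI)

lemma C_mul_X_sub_one_dvd_of_aeval_invSelf_eq_zero {f : A} {p : A[X]}
    (hp : aeval (IsLocalization.Away.invSelf (S := Localization.Away f) f) p = 0) :
    C f * X - 1 ∣ p := by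
  rw [← AdjoinRoot.mk_eq_zero]
  apply (Localization.awayEquivAdjoin f).symm.injective
  rw [map_zero]
  exact hp

section span

variable {ι : Type*} (f : A) (a : ι → A)

/-- The elements `a i / f` of `A_f`, described without division. -/
def awayFractions : Set (Localization.Away f) :=
  {x | ∃ i, x * algebraMap A (Localization.Away f) f = algebraMap A (Localization.Away f) (a i)}

lemma algebraMap_mul_invSelf_mem_adjoin {y : A} (hy : y ∈ Ideal.span (Set.range a)) :
    algebraMap A (Localization.Away f) y * IsLocalization.Away.invSelf f ∈
      Algebra.adjoin A (awayFractions f a) := by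
  induction hy using Submodule.span_induction with
  | mem z hz =>
    obtain ⟨i, rfl⟩ := hz
    refine Algebra.subset_adjoin ⟨i, ?_⟩
    rw [mul_assoc, mul_comm (IsLocalization.Away.invSelf f), IsLocalization.Away.mul_invSelf,
      mul_one]
  | zero => simp
  | add z w _ _ hz hw => rw [map_add, add_mul]; exact add_mem hz hw
  | smul r z _ hz =>
    rw [smul_eq_mul, map_mul, mul_assoc]
    exact Subalgebra.mul_mem _ (Subalgebra.algebraMap_mem _ r) hz

lemma algebraMap_mul_invSelf_pow_mem_adjoin {n : ℕ} {c : A}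
    (hc : c ∈ Ideal.span (Set.range a) ^ n) :
    algebraMap A (Localization.Away f) c * IsLocalization.Away.invSelf f ^ n ∈
      Algebra.adjoin A (awayFractions f a) := by
  induction n generalizing c with
  | zero => simp
  | succ n ih =>
    rw [pow_succ] at hc
    refine Submodule.mul_induction_on hc (fun x hx y hy => ?_) (fun x y hx hy => ?_)
    · have hxy : algebraMap A (Localization.Away f) (x * y) *
            IsLocalization.Away.invSelf f ^ (n + 1)
          = (algebraMap A _ x * IsLocalization.Away.invSelf f ^ n) *
            (algebraMap A _ y * IsLocalization.Away.invSelf f) := by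
        rw [map_mul, pow_succ]; ring
      rw [hxy]
      exact Subalgebra.mul_mem _ (ih hx) (algebraMap_mul_invSelf_mem_adjoin f a hy)
    · rw [map_add, add_mul]; exact add_mem hx hy

end span

namespace reesAlgebra

/-- The element `t f` of the Rees algebra `A[tI]`, for `f ∈ I`. -/
noncomputable def tMul {I : Ideal A} {f : A} (hfI : f ∈ I) : reesAlgebra I :=
  ⟨monomial 1 f, reesAlgebra.monomial_mem.mpr (by simpa using hfI)⟩

noncomputable def evalInvSelf (I : Ideal A) (f : A) : reesAlgebra I →ₐ[A] Localization.Away f :=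
  (aeval (IsLocalization.Away.invSelf f)).comp (reesAlgebra I).val

lemma evalInvSelf_apply (I : Ideal A) (f : A) (p : reesAlgebra I) :
    evalInvSelf I f p = aeval (IsLocalization.Away.invSelf (S := Localization.Away f) f)
      (p : A[X]) := rfl

lemma ker_evalInvSelf {I : Ideal A} {f : A} (hfI : f ∈ I) :
    RingHom.ker (evalInvSelf I f) = Ideal.span {1 - tMul hfI} := by
  apply le_antisymm
  · intro p hp
    obtain ⟨q, hq⟩ : C f * X - 1 ∣ (p : A[X]) :=
      C_mul_X_sub_one_dvd_of_aeval_invSelf_eq_zero (RingHom.mem_ker.mp hp)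
    have hpq : (1 - C f * X) * -q = (p : A[X]) := by rw [hq]; ring
    have hq_mem : -q ∈ reesAlgebra I :=
      mem_reesAlgebra_of_one_sub_C_mul_X_mul_mem hfI (hpq ▸ p.2)
    refine Ideal.mem_span_singleton'.mpr ⟨⟨-q, hq_mem⟩, Subtype.ext ?_⟩
    rw [← hpq, mul_comm]
    simp [tMul, C_mul_X_eq_monomial]
  · rw [Ideal.span_le, Set.singleton_subset_iff, SetLike.mem_coe, RingHom.mem_ker,
      evalInvSelf_apply]
    simp [tMul, aeval_monomial, IsLocalization.Away.mul_invSelf]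

lemma range_evalInvSelf {ι : Type*} (f : A) (a : ι → A) :
    (evalInvSelf (Ideal.span (Set.range a)) f).range =
      Algebra.adjoin A (awayFractions f a) := by
  apply le_antisymm
  · rintro _ ⟨p, rfl⟩
    change evalInvSelf _ f p ∈ _
    rw [evalInvSelf_apply, aeval_eq_sum_range]
    refine Subalgebra.sum_mem _ fun n _ => ?_
    rw [Algebra.smul_def]
    exact algebraMap_mul_invSelf_pow_mem_adjoin f a ((mem_reesAlgebra_iff _ _).mp p.2 n)
  · rw [Algebra.adjoin_le_iff]
    rintro x ⟨i, hx⟩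
    have hmem : a i ∈ Ideal.span (Set.range a) := Ideal.subset_span ⟨i, rfl⟩
    refine ⟨⟨monomial 1 (a i), reesAlgebra.monomial_mem.mpr (by simpa using hmem)⟩, ?_⟩
    change evalInvSelf _ f _ = x
    rw [evalInvSelf_apply, aeval_monomial, pow_one, ← hx, mul_assoc,
      IsLocalization.Away.mul_invSelf, mul_one]

end reesAlgebra

end

/-- If `I = (a_1, …, a_l)` and `f ∈ I` is a non-zerodivisor, then the quotient of the
Rees algebra `A[tI]` by the principal ideal `(1 - tf)` is isomorphic, as an `A`-algebra,
to the subring `A[a_1/f, …, a_l/f]` of the localization `A_f`. -/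
theorem stmt_2 {A : Type*} [CommRing A] (I : Ideal A) (f : A)
    (hfI : f ∈ I)
    (l : ℕ) (a : Fin l → A) (hgen : I = Ideal.span (Set.range a)) :
    Nonempty
      ((↥(reesAlgebra I) ⧸
          (Ideal.span {1 - (⟨Polynomial.monomial 1 f,
              (reesAlgebra.monomial_mem).mpr (by simpa using hfI)⟩ : ↥(reesAlgebra I))} :
            Ideal ↥(reesAlgebra I)))
        ≃ₐ[A]
       ↥(Algebra.adjoin A {x : Localization.Away f |
          ∃ i : Fin l, x * algebraMap A (Localization.Away f) f
            = algebraMap A (Localization.Away f) (a i)})) := by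
  subst hgen
  exact ⟨(Ideal.quotientEquivAlgOfEq A (reesAlgebra.ker_evalInvSelf hfI).symm).trans <|
    (Ideal.quotientKerEquivRange _).trans <|
      Subalgebra.equivOfEq _ _ (reesAlgebra.range_evalInvSelf f a)⟩
end

section
/- Let A be a commutative domain, I ⊆ A an ideal with f ∈ I, f ≠ 0, and let A' = A[I/f] ⊆ Frac(A). Let α be an automorphism of A with α(f) = f such that α ≡ id mod f^s and α^{-1} ≡ id mod f^s for some s ≥ 1 (i.e., α(a) - a ∈ (f^s) for all a ∈ A, and similarly for α^{-1}). Then α extends to an automorphism α' of A' satisfying α'(x) - x ∈ f^{s-1}·A' for all x ∈ A', and similarly for (α')^{-1}. -/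
open IsFractionRing

lemma stmt3_aux {A : Type*} [CommRing A] [IsDomain A] (I : Ideal A) (f : A)
    (hf : f ≠ 0) (s : ℕ) (hs : 1 ≤ s)
    (α : A ≃+* A) (hαf : α f = f)
    (hα : ∀ a : A, α a - a ∈ Ideal.span {f ^ s}) :
    ∀ x ∈ Algebra.adjoin A {x : FractionRing A |
        ∃ a ∈ I, x * algebraMap A (FractionRing A) f = algebraMap A (FractionRing A) a},
      (ringEquivOfRingEquiv (K := FractionRing A) (L := FractionRing A) α) x
        ∈ Algebra.adjoin A {x : FractionRing A |
            ∃ a ∈ I, x * algebraMap A (FractionRing A) f = algebraMap A (FractionRing A) a} ∧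
      ∃ y ∈ Algebra.adjoin A {x : FractionRing A |
            ∃ a ∈ I, x * algebraMap A (FractionRing A) f = algebraMap A (FractionRing A) a},
        (ringEquivOfRingEquiv (K := FractionRing A) (L := FractionRing A) α) x - x
          = algebraMap A (FractionRing A) f ^ (s - 1) * y := by
  set K := FractionRing A
  set φ := algebraMap A K with hφ
  have hφinj : Function.Injective φ := IsFractionRing.injective A K
  set αK := ringEquivOfRingEquiv (K := K) (L := K) α with hαK
  set S : Set K := {x : K | ∃ a ∈ I, x * φ f = φ a} with hS
  set A' := Algebra.adjoin A S with hA'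
  have hfK : φ f ≠ 0 := fun h => hf (hφinj (h.trans (map_zero φ).symm))
  have hmap : ∀ a : A, αK (φ a) = φ (α a) := fun a =>
    ringEquivOfRingEquiv_algebraMap α a
  obtain ⟨t, rfl⟩ : ∃ t, s = t + 1 := ⟨s - 1, by omega⟩
  simp only [Nat.add_sub_cancel]
  intro x hx
  induction hx using Algebra.adjoin_induction with
  | mem x hxS =>
      obtain ⟨a, haI, hxa⟩ := hxS
      -- α a - a = f^s * c
      obtain ⟨c, hc⟩ := Ideal.mem_span_singleton.mp (hα a)
      -- αK x = x + φ (f^(s-1) * c)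
      have key : αK x = x + φ (f ^ t * c) := by
        apply mul_right_cancel₀ hfK
        have h1 : αK x * φ f = φ (α a) := by
          rw [← hαf, ← hmap f, ← map_mul, hxa, hmap]
        have h2 : φ (α a) = φ a + φ (f ^ (t + 1)) * φ c := by
          rw [← map_mul, ← map_add]
          congr 1
          linear_combination hc
        rw [h1, h2, ← hxa, add_mul]
        congr 1
        rw [← map_mul, ← map_mul]
        congr 1
        ring
      constructor
      · rw [key]
        exact add_mem (Algebra.subset_adjoin ⟨a, haI, hxa⟩) (Subalgebra.algebraMap_mem _ _)
      · refine ⟨φ c, Subalgebra.algebraMap_mem _ _, ?_⟩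
        rw [key, map_mul, map_pow]
        ring
  | algebraMap a =>
      obtain ⟨c, hc⟩ := Ideal.mem_span_singleton.mp (hα a)
      refine ⟨by rw [hmap]; exact Subalgebra.algebraMap_mem _ _, φ (f * c),
        Subalgebra.algebraMap_mem _ _, ?_⟩
      rw [hmap, ← map_sub, hc, ← map_pow, ← map_mul]
      congr 1
      ring
  | add x y hxA hyA ihx ihy =>
      obtain ⟨hx1, yx, hyx, hex⟩ := ihx
      obtain ⟨hy1, yy, hyy, hey⟩ := ihy
      refine ⟨by rw [map_add]; exact add_mem hx1 hy1, yx + yy, add_mem hyx hyy, ?_⟩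
      rw [map_add]
      ring_nf
      linear_combination hex + hey
  | mul x y hxA hyA ihx ihy =>
      obtain ⟨hx1, yx, hyx, hex⟩ := ihx
      obtain ⟨hy1, yy, hyy, hey⟩ := ihy
      refine ⟨by rw [map_mul]; exact mul_mem hx1 hy1,
        αK x * yy + yx * y, add_mem (mul_mem hx1 hyy) (mul_mem hyx hyA), ?_⟩
      rw [map_mul]
      linear_combination αK x * hey + y * hex



/-- Lifting automorphisms congruent to the identity modulo `f^s` through an affine
modification `A' = A[I/f] ⊆ Frac A`: the lift is congruent to the identity modulo
`f^(s-1)`. -/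
theorem stmt_3 {A : Type*} [CommRing A] [IsDomain A] (I : Ideal A) (f : A)
    (hfI : f ∈ I) (hf : f ≠ 0) (s : ℕ) (hs : 1 ≤ s)
    (α : A ≃+* A) (hαf : α f = f)
    (hα : ∀ a : A, α a - a ∈ Ideal.span {f ^ s})
    (hα' : ∀ a : A, α.symm a - a ∈ Ideal.span {f ^ s}) :
    let K := FractionRing A
    let A' : Subalgebra A K :=
      Algebra.adjoin A {x : K | ∃ a ∈ I, x * algebraMap A K f = algebraMap A K a}
    ∃ β : A' ≃+* A',
      (∀ a : A, β (algebraMap A A' a) = algebraMap A A' (α a)) ∧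
      (∀ x : A', β x - x ∈ Ideal.span {algebraMap A A' f ^ (s - 1)}) ∧
      (∀ x : A', β.symm x - x ∈ Ideal.span {algebraMap A A' f ^ (s - 1)}) := by
  intro K A'
  have hαf' : α.symm f = f := by
    conv_lhs => rw [← hαf]
    exact α.symm_apply_apply f
  have h1 := stmt3_aux I f hf s hs α hαf hα
  have h2 := stmt3_aux I f hf s hs α.symm hαf' hα'
  set φ := algebraMap A K with hφ
  set αK := IsFractionRing.ringEquivOfRingEquiv (K := K) (L := K) α with hαK
  have hsymm : ∀ x : K, IsFractionRing.ringEquivOfRingEquiv (K := K) (L := K) α.symm x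
      = αK.symm x := fun x => rfl
  refine ⟨{ toFun := fun x => ⟨αK x.1, (h1 x.1 x.2).1⟩
            invFun := fun x => ⟨αK.symm x.1, by rw [← hsymm]; exact (h2 x.1 x.2).1⟩
            left_inv := fun x => Subtype.ext (αK.symm_apply_apply x.1)
            right_inv := fun x => Subtype.ext (αK.apply_symm_apply x.1)
            map_mul' := fun x y => Subtype.ext (map_mul αK x.1 y.1)
            map_add' := fun x y => Subtype.ext (map_add αK x.1 y.1) }, ?_, ?_, ?_⟩
  · intro a
    apply Subtype.ext
    show αK (algebraMap A K a) = algebraMap A K (α a)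
    exact IsFractionRing.ringEquivOfRingEquiv_algebraMap α a
  · intro x
    obtain ⟨y, hy, hey⟩ := (h1 x.1 x.2).2
    refine Ideal.mem_span_singleton.mpr ⟨⟨y, hy⟩, Subtype.ext ?_⟩
    push_cast
    exact hey
  · intro x
    obtain ⟨y, hy, hey⟩ := (h2 x.1 x.2).2
    refine Ideal.mem_span_singleton.mpr ⟨⟨y, hy⟩, Subtype.ext ?_⟩
    push_cast
    exact hey
end

section
/- Let A be a commutative ring, I ⊆ A an ideal, f ∈ I a non-zerodivisor, and v an indeterminate. Let J = (I, v) ⊆ A[v]. Then the rings A[v][I·A[v]/f] (where I·A[v] is the ideal generated by I in A[v]) and A[v][J/f] are isomorphic as A-algebras. Consequently, if A' = A[I/f], then both affine modifications of Spec A[v] along div f, with center I·A[v] or with center J, are isomorphic to Spec A'[v]. -/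
open Polynomial in
/-- Asanuma's trick: for an ideal `I ⊆ A`, a non-zerodivisor `f ∈ I`, and the ideal
`J = (I, v) ⊆ A[v]`, the affine modifications of `A[v]` along `f` with centers
`I·A[v]` and `J` are isomorphic as `A`-algebras (the isomorphism fixes `A`). -/
theorem stmt_4 {A : Type*} [CommRing A] (I : Ideal A) (f : A)
    (hfI : f ∈ I) (hf : f ∈ nonZeroDivisors A) :
    let P := Polynomial A
    let F : P := Polynomial.C f
    let L := Localization.Away F
    let I₁ : Ideal P := I.map (Polynomial.C : A →+* P)
    let J : Ideal P := I₁ ⊔ Ideal.span {(Polynomial.X : P)}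
    let R₁ : Subalgebra P L :=
      Algebra.adjoin P {x : L | ∃ a ∈ I₁, x * algebraMap P L F = algebraMap P L a}
    let R₂ : Subalgebra P L :=
      Algebra.adjoin P {x : L | ∃ a ∈ J, x * algebraMap P L F = algebraMap P L a}
    ∃ e : R₁ ≃+* R₂, ∀ b : A,
      e ⟨algebraMap P L (Polynomial.C b), R₁.algebraMap_mem (Polynomial.C b)⟩
        = ⟨algebraMap P L (Polynomial.C b), R₂.algebraMap_mem (Polynomial.C b)⟩ := by
  intro P F L I₁ J R₁ R₂
  set π : P →+* L := algebraMap P L with hπdef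
  obtain ⟨u, hu'⟩ : IsUnit (π F) := IsLocalization.Away.algebraMap_isUnit F
  -- the ring hom `P → L` sending `X ↦ X/f`
  set α : P →+* L := Polynomial.eval₂RingHom (π.comp Polynomial.C) (π Polynomial.X * ↑u⁻¹)
    with hαdef
  have hαC : ∀ b : A, α (Polynomial.C b) = π (Polynomial.C b) := fun b =>
    Polynomial.eval₂_C _ _
  have hαX : α Polynomial.X = π Polynomial.X * ↑u⁻¹ := Polynomial.eval₂_X _ _
  have hαF : IsUnit (α F) := by rw [show α F = π F from hαC f]; exact ⟨u, hu'⟩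
  -- the ring hom `P → L` sending `X ↦ f·X`
  set β : P →+* L := π.comp (Polynomial.eval₂RingHom (Polynomial.C : A →+* P) (F * Polynomial.X))
    with hβdef
  have hβC : ∀ b : A, β (Polynomial.C b) = π (Polynomial.C b) := fun b =>
    congrArg π (Polynomial.eval₂_C _ _)
  have hβX : β Polynomial.X = π F * π Polynomial.X :=
    (congrArg π (Polynomial.eval₂_X _ _)).trans (map_mul π F Polynomial.X)
  have hβF : IsUnit (β F) := by rw [show β F = π F from hβC f]; exact ⟨u, hu'⟩
  set φ : L →+* L := IsLocalization.Away.lift F hαF with hφdef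
  set ψ : L →+* L := IsLocalization.Away.lift F hβF with hψdef
  have hφa : ∀ p : P, φ (π p) = α p := fun p => IsLocalization.Away.lift_eq F hαF p
  have hψa : ∀ p : P, ψ (π p) = β p := fun p => IsLocalization.Away.lift_eq F hβF p
  have huinv : ↑u⁻¹ * π F = 1 := by rw [← hu']; exact u.inv_mul
  -- φ and ψ fix u⁻¹
  have hφu : φ ↑u⁻¹ = ↑u⁻¹ := by
    have h1 : π F * φ ↑u⁻¹ = 1 := by
      have := map_mul φ (π F) ↑u⁻¹
      rw [hφa F, show α F = π F from hαC f] at this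
      rw [← this, mul_comm (π F), huinv, map_one]
    calc φ ↑u⁻¹ = (↑u⁻¹ * π F) * φ ↑u⁻¹ := by rw [huinv, one_mul]
      _ = ↑u⁻¹ * (π F * φ ↑u⁻¹) := by ring
      _ = ↑u⁻¹ := by rw [h1, mul_one]
  have hψu : ψ ↑u⁻¹ = ↑u⁻¹ := by
    have h1 : π F * ψ ↑u⁻¹ = 1 := by
      have := map_mul ψ (π F) ↑u⁻¹
      rw [hψa F, show β F = π F from hβC f] at this
      rw [← this, mul_comm (π F), huinv, map_one]
    calc ψ ↑u⁻¹ = (↑u⁻¹ * π F) * ψ ↑u⁻¹ := by rw [huinv, one_mul]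
      _ = ↑u⁻¹ * (π F * ψ ↑u⁻¹) := by ring
      _ = ↑u⁻¹ := by rw [h1, mul_one]
  -- φ and ψ are mutually inverse
  have hψφ : ∀ x : L, ψ (φ x) = x := by
    have : (ψ.comp φ).comp π = (RingHom.id L).comp π := by
      apply Polynomial.ringHom_ext
      · intro a
        simp only [RingHom.comp_apply, RingHom.id_apply]
        rw [hφa, hαC, hψa, hβC]
      · simp only [RingHom.comp_apply, RingHom.id_apply]
        rw [hφa, hαX, map_mul, hψa, hβX, hψu]
        linear_combination (π Polynomial.X) * huinv
    have := IsLocalization.ringHom_ext (Submonoid.powers F) (S := L) this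
    intro x
    exact congrArg (fun g : L →+* L => g x) this
  have hφψ : ∀ x : L, φ (ψ x) = x := by
    have : (φ.comp ψ).comp π = (RingHom.id L).comp π := by
      apply Polynomial.ringHom_ext
      · intro a
        simp only [RingHom.comp_apply, RingHom.id_apply]
        rw [hψa, hβC, hφa, hαC]
      · simp only [RingHom.comp_apply, RingHom.id_apply]
        rw [hψa, hβX, map_mul, hφa, hφa, hαX, show α F = π F from hαC f]
        linear_combination (π Polynomial.X) * huinv
    have := IsLocalization.ringHom_ext (Submonoid.powers F) (S := L) this
    intro x
    exact congrArg (fun g : L →+* L => g x) this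
  -- the generator `X/f` of `R₂`
  have hXJ : (Polynomial.X : P) ∈ J := Ideal.mem_sup_right (Ideal.subset_span rfl)
  have hXu : π Polynomial.X * ↑u⁻¹ ∈ R₂ := by
    apply Algebra.subset_adjoin
    exact ⟨Polynomial.X, hXJ, by rw [mul_assoc, huinv, mul_one]⟩
  -- φ maps the image of P into R₂
  have hrange₂ : ∀ p : P, φ (π p) ∈ R₂ := by
    intro p
    rw [hφa]
    induction p using Polynomial.induction_on' with
    | add p q hp hq => rw [map_add]; exact add_mem hp hq
    | monomial n a =>
      rw [show α (Polynomial.monomial n a)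
          = π (Polynomial.C a) * (π Polynomial.X * ↑u⁻¹) ^ n from
        Polynomial.eval₂_monomial _ _]
      exact mul_mem (R₂.algebraMap_mem _) (pow_mem hXu n)
  -- ψ maps the image of P into R₁
  have hrange₁ : ∀ p : P, ψ (π p) ∈ R₁ := by
    intro p
    rw [hψa]
    exact R₁.algebraMap_mem
      (Polynomial.eval₂ (Polynomial.C : A →+* P) (F * Polynomial.X) p)
  -- key computation: generators are determined
  have hgen : ∀ x : L, ∀ a : P, x * π F = π a → x = π a * ↑u⁻¹ := by
    intro x a h
    calc x = x * (π F * ↑u⁻¹) := by rw [mul_comm (π F), huinv, mul_one]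
      _ = (x * π F) * ↑u⁻¹ := by ring
      _ = π a * ↑u⁻¹ := by rw [h]
  -- φ maps generators of R₁ into R₂
  have hIα : ∀ a ∈ I₁, α a * ↑u⁻¹ ∈ R₂ := by
    intro a ha
    refine Submodule.span_induction ?_ ?_ ?_ ?_ ha
    · rintro _ ⟨i, hi, rfl⟩
      rw [hαC]
      apply Algebra.subset_adjoin
      exact ⟨Polynomial.C i, Ideal.mem_sup_left (Ideal.mem_map_of_mem _ hi),
        by rw [mul_assoc, huinv, mul_one]⟩
    · rw [map_zero, zero_mul]; exact zero_mem _
    · intro x y hx hy hpx hpy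
      rw [map_add, add_mul]; exact add_mem hpx hpy
    · intro p x hx hpx
      rw [smul_eq_mul, map_mul, mul_assoc]
      have := hrange₂ p
      rw [hφa] at this
      exact mul_mem this hpx
  have hgen₂ : ∀ x ∈ {x : L | ∃ a ∈ I₁, x * π F = π a}, φ x ∈ R₂ := by
    rintro x ⟨a, ha, hxa⟩
    rw [hgen x a hxa, map_mul, hφa, hφu]
    exact hIα a ha
  -- ψ maps generators of R₂ into R₁
  have hJβ : ∀ a ∈ J, β a * ↑u⁻¹ ∈ R₁ := by
    intro a ha
    have ha' : a ∈ Submodule.span P ((Polynomial.C : A →+* P) '' I ∪ {Polynomial.X}) := by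
      rw [Submodule.span_union]
      exact ha
    refine Submodule.span_induction ?_ ?_ ?_ ?_ ha'
    · rintro x hx
      rcases hx with ⟨i, hi, rfl⟩ | hx
      · rw [hβC]
        apply Algebra.subset_adjoin
        exact ⟨Polynomial.C i, Ideal.mem_map_of_mem _ hi, by rw [mul_assoc, huinv, mul_one]⟩
      · rw [Set.mem_singleton_iff] at hx
        subst hx
        rw [show β Polynomial.X * ↑u⁻¹ = π Polynomial.X from by
          rw [hβX]; linear_combination (π Polynomial.X) * huinv]
        exact R₁.algebraMap_mem _
    · rw [map_zero, zero_mul]; exact zero_mem _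
    · intro x y hx hy hpx hpy
      rw [map_add, add_mul]; exact add_mem hpx hpy
    · intro p x hx hpx
      rw [smul_eq_mul, map_mul, mul_assoc]
      have := hrange₁ p
      rw [hψa] at this
      exact mul_mem this hpx
  have hgen₁ : ∀ x ∈ {x : L | ∃ a ∈ J, x * π F = π a}, ψ x ∈ R₁ := by
    rintro x ⟨a, ha, hxa⟩
    rw [hgen x a hxa, map_mul, hψa, hψu]
    exact hJβ a ha
  -- φ maps R₁ into R₂, ψ maps R₂ into R₁
  have hφR : ∀ x ∈ R₁, φ x ∈ R₂ := by
    intro x hx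
    refine Algebra.adjoin_induction hgen₂ hrange₂ ?_ ?_ hx
    · intro x y _ _ hx hy; rw [map_add]; exact add_mem hx hy
    · intro x y _ _ hx hy; rw [map_mul]; exact mul_mem hx hy
  have hψR : ∀ x ∈ R₂, ψ x ∈ R₁ := by
    intro x hx
    refine Algebra.adjoin_induction hgen₁ hrange₁ ?_ ?_ hx
    · intro x y _ _ hx hy; rw [map_add]; exact add_mem hx hy
    · intro x y _ _ hx hy; rw [map_mul]; exact mul_mem hx hy
  refine ⟨{ toFun := fun x => ⟨φ x, hφR x x.2⟩
            invFun := fun x => ⟨ψ x, hψR x x.2⟩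
            left_inv := fun x => Subtype.ext (hψφ x)
            right_inv := fun x => Subtype.ext (hφψ x)
            map_mul' := fun x y => Subtype.ext (map_mul φ (x : L) (y : L))
            map_add' := fun x y => Subtype.ext (map_add φ (x : L) (y : L)) }, ?_⟩
  intro b
  refine Subtype.ext ?_
  show φ (π (Polynomial.C b)) = π (Polynomial.C b)
  rw [hφa]; exact hαC b
end

section
/- Let X and X' be affine varieties with isomorphic cylinders X × A^1 ≅ X' × A^1, and suppose X admits a surjection π : X → C onto a smooth affine curve C with C not isomorphic to A^1 (so that every morphism A^1 → C is constant). Then the composite X' × A^1 → X × A^1 → C factors through the projection X' × A^1 → X', giving a surjection π' : X' → C, and the isomorphism of cylinders is an isomorphism over C. -/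
/-!
Over an algebraically closed field, a reduced finitely generated algebra is determined by its
values at `k`-points (Nullstellensatz). At every point of `X'`, the composite
`R → A[X] → A'[X]` specialises to a morphism `𝔸¹ → C`, which is constant by hypothesis; so all
its non-constant coefficients vanish at every point, hence vanish, and the composite factors
through `A'`. A point of `C` lifts to a point of `X`, hence to the point `(x, 0)` of the
cylinder; its image under the isomorphism projects to a point of `X'` lying over the same
point of `C`.
-/

open Polynomial

section Points

variable {k B : Type*} [Field k] [IsAlgClosed k] [CommRing B] [Algebra k B]
  [Algebra.FiniteType k B]

theorem exists_algHom_ker_eq (m : Ideal B) [m.IsMaximal] :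
    ∃ f : B →ₐ[k] k, RingHom.ker f = m := by
  let := Ideal.Quotient.field m
  have : Algebra.FiniteType k (B ⧸ m) :=
    .of_surjective (Ideal.Quotient.mkₐ k m) (Ideal.Quotient.mkₐ_surjective k m)
  have : Module.Finite k (B ⧸ m) := finite_of_finite_type_of_isJacobsonRing k _
  let e : k ≃ₐ[k] B ⧸ m :=
    .ofBijective (Algebra.ofId k _) IsAlgClosed.algebraMap_bijective_of_isIntegral
  refine ⟨e.symm.toAlgHom.comp (Ideal.Quotient.mkₐ k m), ?_⟩
  ext x
  simp [Ideal.Quotient.eq_zero_iff_mem]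

theorem eq_zero_of_forall_algHom_apply_eq_zero [IsReduced B] {x : B}
    (hx : ∀ f : B →ₐ[k] k, f x = 0) : x = 0 := by
  have : IsJacobsonRing B := isJacobsonRing_of_finiteType (A := k)
  have hmem : x ∈ (⊥ : Ideal B).jacobson := Ideal.mem_sInf.2 fun m ⟨_, hm⟩ => by
    obtain ⟨f, rfl⟩ := exists_algHom_ker_eq (k := k) m
    exact hx f
  rwa [IsJacobsonRing.out inferInstance Ideal.isRadical_bot] at hmem

theorem Polynomial.eq_C_of_forall_map_algHom_mem_range_C [IsReduced B] {p : B[X]}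
    (hp : ∀ f : B →ₐ[k] k, p.map (f : B →+* k) ∈ Set.range C) : p = C (p.coeff 0) := by
  ext n
  rcases eq_or_ne n 0 with rfl | hn
  · simp
  rw [coeff_C, if_neg hn]
  refine eq_zero_of_forall_algHom_apply_eq_zero (k := k) fun f => ?_
  obtain ⟨c, hc⟩ := hp f
  simpa [coeff_C, hn] using congr_arg (coeff · n) hc.symm

end Points

theorem exists_algHom_eq_C_of_forall_mem_range_C {k R B : Type*} [Field k] [IsAlgClosed k]
    [CommRing R] [Algebra k R] [CommRing B] [IsReduced B] [Algebra k B]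
    [Algebra.FiniteType k B]
    (hR : ∀ φ : R →ₐ[k] k[X], ∀ r : R, φ r ∈ Set.range (C : k → k[X]))
    (ψ : R →ₐ[k] B[X]) : ∃ ψ₀ : R →ₐ[k] B, ∀ r, ψ r = C (ψ₀ r) := by
  refine ⟨((aeval (0 : B)).restrictScalars k).comp ψ, fun r => ?_⟩
  rw [AlgHom.comp_apply, AlgHom.restrictScalars_apply, ← coeff_zero_eq_aeval_zero]
  exact eq_C_of_forall_map_algHom_mem_range_C (k := k) fun f =>
    hR ((mapAlgHom f).comp ψ) r

theorem exists_isMaximal_forall_C_mem_iff {k A A' : Type*} [Field k] [IsAlgClosed k]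
    [CommRing A] [Algebra k A] [CommRing A'] [Algebra k A'] [Algebra.FiniteType k A']
    (Φ : A[X] ≃ₐ[k] A'[X]) (Q₀ : Ideal A) [Q₀.IsMaximal] :
    ∃ Q : Ideal A', Q.IsMaximal ∧
      ∀ {a : A} {a' : A'}, Φ (C a) = C a' → (a' ∈ Q ↔ a ∈ Q₀) := by
  -- `M` is the point `(Q₀, 0)` of the cylinder over `A`.
  let M : Ideal A[X] := Q₀.comap constantCoeff
  have : M.IsMaximal := Ideal.comap_isMaximal_of_surjective _ constantCoeff_surjective
  have : (M.comap Φ.symm).IsMaximal := Ideal.comap_isMaximal_of_surjective _ Φ.symm.surjective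
  obtain ⟨θ, hθ⟩ := exists_algHom_ker_eq (k := k) (M.comap Φ.symm)
  let η : A' →ₐ[k] k := θ.comp CAlgHom
  have hη : Function.Surjective η := fun c => ⟨algebraMap k A' c, η.commutes c⟩
  refine ⟨RingHom.ker η, RingHom.ker_isMaximal_of_surjective η hη, fun {a a'} h => ?_⟩
  have : Φ.symm (C a') = C a := by rw [← h, AlgEquiv.symm_apply_apply]
  change C a' ∈ RingHom.ker θ ↔ _
  simp [hθ, M, this]

theorem stmt_8_general {k : Type*} [Field k] [IsAlgClosed k]
    {R A A' : Type*} [CommRing R] [Algebra k R]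
    [CommRing A] [Algebra k A]
    [CommRing A'] [IsReduced A'] [Algebra k A'] [Algebra.FiniteType k A']
    (hC : ∀ φ : R →ₐ[k] Polynomial k, ∀ r : R,
      φ r ∈ Set.range (Polynomial.C : k → Polynomial k))
    (π : R →ₐ[k] A)
    (hπsurj : ∀ P : Ideal R, P.IsMaximal →
      ∃ Q : Ideal A, Q.IsMaximal ∧ P = Q.comap π.toRingHom)
    (Φ : Polynomial A ≃ₐ[k] Polynomial A') :
    ∃ π' : R →ₐ[k] A',
      (∀ r : R, Φ (Polynomial.C (π r)) = Polynomial.C (π' r)) ∧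
      (∀ P : Ideal R, P.IsMaximal →
        ∃ Q : Ideal A', Q.IsMaximal ∧ P = Q.comap π'.toRingHom) := by
  obtain ⟨π', hπ'⟩ :=
    exists_algHom_eq_C_of_forall_mem_range_C hC ((Φ.toAlgHom.comp CAlgHom).comp π)
  refine ⟨π', hπ', fun P hP => ?_⟩
  obtain ⟨Q₀, _, rfl⟩ := hπsurj P hP
  obtain ⟨Q, hQ, hQQ₀⟩ := exists_isMaximal_forall_C_mem_iff Φ Q₀
  exact ⟨Q, hQ, Ideal.ext fun r => (hQQ₀ (hπ' r)).symm⟩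

/-- Let `X = Spec A`, `X' = Spec A'` be affine varieties with isomorphic cylinders
(`Φ : A[v] ≅ A'[v]`), and let `π : X → C = Spec R` be a surjection onto a smooth affine
curve `C` not isomorphic to `𝔸¹` (so every morphism `𝔸¹ → C` is constant, hypothesis
`hC`).  Then the composite `X' × 𝔸¹ → X × 𝔸¹ → C` factors through the projection
`X' × 𝔸¹ → X'`, giving a surjection `π' : X' → C`, and the isomorphism of cylinders is
an isomorphism over `C`. -/
theorem stmt_8 {k : Type*} [Field k] [IsAlgClosed k] [CharZero k]
    {R A A' : Type*} [CommRing R] [IsDomain R] [Algebra k R] [Algebra.FiniteType k R]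
    [CommRing A] [IsReduced A] [Algebra k A] [Algebra.FiniteType k A]
    [CommRing A'] [IsReduced A'] [Algebra k A'] [Algebra.FiniteType k A']
    (hdim : ringKrullDim R = 1)
    (hC : ∀ φ : R →ₐ[k] Polynomial k, ∀ r : R,
      φ r ∈ Set.range (Polynomial.C : k → Polynomial k))
    (π : R →ₐ[k] A) (hπ : Function.Injective π)
    (hπsurj : ∀ P : Ideal R, P.IsMaximal →
      ∃ Q : Ideal A, Q.IsMaximal ∧ P = Q.comap π.toRingHom)
    (Φ : Polynomial A ≃ₐ[k] Polynomial A') :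
    ∃ π' : R →ₐ[k] A',
      (∀ r : R, Φ (Polynomial.C (π r)) = Polynomial.C (π' r)) ∧
      (∀ P : Ideal R, P.IsMaximal →
        ∃ Q : Ideal A', Q.IsMaximal ∧ P = Q.comap π'.toRingHom) :=
  stmt_8_general hC π hπsurj Φ
end
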